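/- For n×n positive definite Hermitian matrices g and h, one has tr_{h} g ≤ (n-1)! (tr_g h)^{n-1} det g / det h, i.e. tr(h⁻¹ g) ≤ (n-1)! · (tr(g⁻¹ h))^{n-1} · det(g)/det(h). -/

import Mathlib

open ComplexOrder

open Matrix Finset

lemma stmt16_scalar {n : ℕ} (hn : 1 ≤ n) (lam : Fin n → ℝ) (hpos : ∀ i, 0 < lam i) :
    (∑ i, (lam i)⁻¹) * ∏ i, lam i ≤
      (Nat.factorial (n - 1) : ℝ) * (∑ i, lam i) ^ (n - 1) := by
  set S : ℝ := ∑ i, lam i with hS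
  have hSpos : 0 < S := Finset.sum_pos (fun i _ => hpos i) (by
    simpa using Finset.univ_nonempty_iff.mpr (Fin.pos_iff_nonempty.mp hn))
  have hstep : ∀ i : Fin n, (lam i)⁻¹ * ∏ j, lam j = ∏ j ∈ univ.erase i, lam j := by
    intro i
    rw [← Finset.mul_prod_erase univ lam (mem_univ i), ← mul_assoc,
      inv_mul_cancel₀ (hpos i).ne', one_mul]
  have key : ∑ i, ∏ j ∈ univ.erase i, lam j ≤ S ^ (n - 1) := by
    rcases eq_or_lt_of_le hn with h1 | h2
    · -- n = 1
      have : n = 1 := h1.symm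
      subst this
      simp
    · -- 2 ≤ n
      obtain ⟨m, rfl⟩ : ∃ m, n = m + 2 := ⟨n - 2, by omega⟩
      have hone : (1 : Fin (m + 2)) ≠ 0 := by simp [Fin.ext_iff]
      have hne : ∀ i : Fin (m + 2), i + 1 ≠ i := by
        intro i hEq
        apply hone
        have : i + 1 = i + 0 := by simpa using hEq
        exact add_left_cancel this
      have hle : ∀ j, lam j ≤ S :=
        fun j => Finset.single_le_sum (fun i _ => (hpos i).le) (mem_univ j)
      have step : ∀ i : Fin (m + 2),
          ∏ j ∈ univ.erase i, lam j ≤ lam (i + 1) * S ^ m := by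
        intro i
        have hmem : i + 1 ∈ univ.erase i := mem_erase.mpr ⟨hne i, mem_univ _⟩
        rw [← Finset.mul_prod_erase _ lam hmem]
        have hcard : ((univ.erase i).erase (i + 1)).card = m := by
          rw [card_erase_of_mem hmem, card_erase_of_mem (mem_univ i), card_univ,
            Fintype.card_fin]
          omega
        have : ∏ j ∈ (univ.erase i).erase (i + 1), lam j ≤ S ^ m := by
          calc ∏ j ∈ (univ.erase i).erase (i + 1), lam j
              ≤ ∏ _j ∈ (univ.erase i).erase (i + 1), S :=
                Finset.prod_le_prod (fun j _ => (hpos j).le) (fun j _ => hle j)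
            _ = S ^ m := by rw [prod_const, hcard]
        exact mul_le_mul_of_nonneg_left this (hpos _).le
      calc ∑ i, ∏ j ∈ univ.erase i, lam j
          ≤ ∑ i, lam (i + 1) * S ^ m := Finset.sum_le_sum fun i _ => step i
        _ = (∑ i, lam (i + 1)) * S ^ m := by rw [Finset.sum_mul]
        _ = S * S ^ m := by
            rw [hS]
            congr 1
            exact Equiv.sum_comp (Equiv.addRight (1 : Fin (m + 2))) lam
        _ = S ^ (m + 2 - 1) := by rw [← pow_succ']; norm_num
  calc (∑ i, (lam i)⁻¹) * ∏ i, lam i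
      = ∑ i, ∏ j ∈ univ.erase i, lam j := by
        rw [Finset.sum_mul]; exact Finset.sum_congr rfl fun i _ => hstep i
    _ ≤ S ^ (n - 1) := key
    _ ≤ (Nat.factorial (n - 1) : ℝ) * S ^ (n - 1) := by
        nlinarith [pow_pos hSpos (n - 1), Nat.one_le_cast (α := ℝ) |>.mpr
          (Nat.one_le_iff_ne_zero.mpr (Nat.factorial_ne_zero (n - 1)))]

section spec
variable {N : Type*} [Fintype N] [DecidableEq N]

lemma stmt16_trace_eq {m : Matrix N N ℂ} (hm : m.IsHermitian) :
    m.trace = ((∑ i, hm.eigenvalues i : ℝ) : ℂ) := by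
  conv_lhs => rw [hm.spectral_theorem, Unitary.conjStarAlgAut_apply]
  rw [trace_mul_cycle, (Matrix.mem_unitaryGroup_iff').mp (hm.eigenvectorUnitary).2,
    Matrix.one_mul, trace_diagonal]
  push_cast
  rfl

lemma stmt16_inv_trace_eq {m : Matrix N N ℂ} (hm : m.IsHermitian)
    (hpos : ∀ i, 0 < hm.eigenvalues i) :
    m⁻¹.trace = ((∑ i, (hm.eigenvalues i)⁻¹ : ℝ) : ℂ) := by
  set Uc : Matrix N N ℂ := (hm.eigenvectorUnitary : Matrix N N ℂ) with hUc
  have hU1 : Uc * star Uc = 1 := (Matrix.mem_unitaryGroup_iff).mp (hm.eigenvectorUnitary).2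
  have hU2 : star Uc * Uc = 1 := (Matrix.mem_unitaryGroup_iff').mp (hm.eigenvectorUnitary).2
  set D' : Matrix N N ℂ := diagonal (fun i => ((hm.eigenvalues i)⁻¹ : ℂ)) with hD'
  have hinv : m⁻¹ = Uc * D' * star Uc := by
    apply Matrix.inv_eq_right_inv
    conv_lhs => rw [hm.spectral_theorem, Unitary.conjStarAlgAut_apply]
    simp only [Matrix.mul_assoc]
    rw [← Matrix.mul_assoc (star Uc) Uc, hU2, Matrix.one_mul,
      ← Matrix.mul_assoc (diagonal _) D', diagonal_mul_diagonal]
    have : (fun i => (RCLike.ofReal ∘ hm.eigenvalues) i * ((hm.eigenvalues i)⁻¹ : ℂ))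
        = fun _ => (1 : ℂ) := by
      funext i
      simp only [Function.comp_apply]
      exact mul_inv_cancel₀ (Complex.ofReal_ne_zero.mpr (hpos i).ne')
    rw [this, diagonal_one, Matrix.one_mul, hU1]
  rw [hinv, trace_mul_cycle, hU2, Matrix.one_mul, trace_diagonal]
  push_cast
  rfl

lemma stmt16_det_eq {m : Matrix N N ℂ} (hm : m.IsHermitian) :
    m.det = ((∏ i, hm.eigenvalues i : ℝ) : ℂ) := by
  rw [hm.det_eq_prod_eigenvalues]
  push_cast
  rfl

end spec

/-- eigenvalue estimate for positive definite Hermitian matrices: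
tr(h⁻¹g) ≤ (n-1)! (tr(g⁻¹h))^{n-1} det g / det h. -/
theorem stmt16 (n : ℕ) (hn : 1 ≤ n)
    (g h : Matrix (Fin n) (Fin n) ℂ)
    (hg : g.PosDef) (hh : h.PosDef) :
    (h⁻¹ * g).trace.re ≤
      (Nat.factorial (n - 1) : ℝ) * ((g⁻¹ * h).trace.re) ^ (n - 1)
        * g.det.re / h.det.re := by
  classical
  have hgsd := hg.posSemidef
  set s : Matrix (Fin n) (Fin n) ℂ := open scoped MatrixOrder in CFC.sqrt g with hs_def
  have hs : s.PosSemidef := open scoped MatrixOrder in (CFC.sqrt_nonneg g).posSemidef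
  have hss : s * s = g := open scoped MatrixOrder in CFC.sqrt_mul_sqrt_self g hgsd.nonneg
  have hdetg : g.det ≠ 0 := hg.det_pos.ne'
  have hdeth : h.det ≠ 0 := hh.det_pos.ne'
  have hdets : s.det ≠ 0 := by
    intro h0
    apply hdetg
    rw [← hss, det_mul, h0, zero_mul]
  have hus : IsUnit s.det := isUnit_iff_ne_zero.mpr hdets
  set m : Matrix (Fin n) (Fin n) ℂ := s⁻¹ * h * s⁻¹ with hm_def
  have hsinvH : (s⁻¹)ᴴ = s⁻¹ := hs.1.inv
  have hmps : m.PosSemidef := by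
    have := hh.posSemidef.mul_mul_conjTranspose_same s⁻¹
    rwa [hsinvH] at this
  have hm : m.IsHermitian := hmps.1
  have hdet_sinv : s⁻¹.det = s.det⁻¹ := by
    rw [det_nonsing_inv, Ring.inverse_eq_inv']
  have hdet_m : m.det = h.det / g.det := by
    rw [hm_def, det_mul, det_mul, hdet_sinv, ← hss, det_mul]
    field_simp
  have hdetm_ne : m.det ≠ 0 := by
    rw [hdet_m]; exact div_ne_zero hdeth hdetg
  set lam : Fin n → ℝ := hm.eigenvalues with hlam
  have hpos : ∀ i, 0 < lam i := by
    intro i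
    rcases lt_or_eq_of_le (hmps.eigenvalues_nonneg i) with h' | h'
    · exact h'
    · exfalso
      apply hdetm_ne
      rw [stmt16_det_eq hm,
        show (∏ j, lam j) = 0 from Finset.prod_eq_zero (Finset.mem_univ i) h'.symm]
      simp
  have htr1 : (g⁻¹ * h).trace = m.trace := by
    rw [← hss, Matrix.mul_inv_rev, Matrix.mul_assoc, trace_mul_comm, hm_def,
      Matrix.mul_assoc]
  have htr2 : (h⁻¹ * g).trace = m⁻¹.trace := by
    conv_rhs => rw [hm_def, Matrix.mul_inv_rev, Matrix.mul_inv_rev,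
      nonsing_inv_nonsing_inv s hus]
    rw [Matrix.trace_mul_comm s (h⁻¹ * s), Matrix.mul_assoc, hss]
  have e1 : (g⁻¹ * h).trace.re = ∑ i, lam i := by
    rw [htr1, stmt16_trace_eq hm, Complex.ofReal_re]
  have e2 : (h⁻¹ * g).trace.re = ∑ i, (lam i)⁻¹ := by
    rw [htr2, stmt16_inv_trace_eq hm hpos, Complex.ofReal_re]
  have hgre_pos : 0 < g.det.re := (Complex.lt_def.mp hg.det_pos).1
  have hg_im : g.det.im = 0 := (Complex.lt_def.mp hg.det_pos).2.symm
  have hg_real : g.det = (g.det.re : ℂ) := Complex.ext rfl (by simp [hg_im])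
  have hdet_rel : h.det = ((g.det.re * ∏ i, lam i : ℝ) : ℂ) := by
    have : h.det = g.det * m.det := by rw [hdet_m]; field_simp
    rw [this, stmt16_det_eq hm, hg_real]
    push_cast
    rfl
  have hre_rel : h.det.re = g.det.re * ∏ i, lam i := by
    rw [hdet_rel, Complex.ofReal_re]
  have hprod : 0 < ∏ i, lam i := Finset.prod_pos fun i _ => hpos i
  rw [e1, e2, hre_rel]
  have hrw : (Nat.factorial (n - 1) : ℝ) * (∑ i, lam i) ^ (n - 1) * g.det.re /
      (g.det.re * ∏ i, lam i)
      = ((Nat.factorial (n - 1) : ℝ) * (∑ i, lam i) ^ (n - 1)) / ∏ i, lam i := by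
    field_simp
  rw [hrw, le_div_iff₀ hprod]
  exact stmt16_scalar hn lam hpos
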